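/- Let H be a complex Hilbert space, let {P_a}_{a=1}^c and {Q_b}_{b=1}^c be POVMs with c outputs in M_n(B(H)) whose entries commute (P_{a,ij} Q_{b,kl} = Q_{b,kl} P_{a,ij} for all a, b, i, j, k, l), and let χ ∈ H be a unit vector. Define X^{(a,b)}_{(i,j),(k,l)} = ⟨P_{a,ij} Q_{b,kl} χ, χ⟩. Then the following are equivalent: (1) there is a partition S_1 ∪ ⋯ ∪ S_ℓ of {1, …, n} such that for every r and every a ≠ b, Σ_{i,j ∈ S_r} X^{(a,b)}_{(i,j),(i,j)} = 0; (2) (1/n) Σ_{a=1}^c Σ_{i,j=1}^n X^{(a,a)}_{(i,j),(i,j)} = 1; (3) for all a ≠ b, Σ_{i,j=1}^n X^{(a,b)}_{(i,j),(i,j)} = 0. -/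

import Mathlib

open scoped ENNReal

set_option synthInstance.maxHeartbeats 1000000
set_option maxHeartbeats 1000000

noncomputable section

instance piLpCompleteSpace {ι : Type*} (p : ℝ≥0∞) (β : ι → Type*)
    [∀ i, UniformSpace (β i)] [∀ i, CompleteSpace (β i)] : CompleteSpace (PiLp p β) :=
  (PiLp.uniformEquiv p β).completeSpace_iff.2 (Pi.complete β)

/-- The isometric embedding of `E` onto the `i`-th coordinate of the
ℓ²-direct sum of `n` copies of `E`. -/
def inclPi (E : Type*) [NormedAddCommGroup E] [InnerProductSpace ℂ E]
    (n : ℕ) (i : Fin n) : E →L[ℂ] PiLp 2 (fun _ : Fin n => E) :=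
  (PiLp.continuousLinearEquiv 2 ℂ (fun _ : Fin n => E)).symm.toContinuousLinearMap.comp
    (ContinuousLinearMap.pi fun j => if j = i then ContinuousLinearMap.id ℂ E else 0)

/-- The continuous linear projection onto the `i`-th coordinate of the
ℓ²-direct sum of `n` copies of `E`. -/
def projPi (E : Type*) [NormedAddCommGroup E] [InnerProductSpace ℂ E]
    (n : ℕ) (i : Fin n) : PiLp 2 (fun _ : Fin n => E) →L[ℂ] E :=
  (ContinuousLinearMap.proj i).comp
    (PiLp.continuousLinearEquiv 2 ℂ (fun _ : Fin n => E)).toContinuousLinearMap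

/-- The operator on the ℓ²-direct sum `E^n` associated to an `n × n` matrix of bounded
operators on `E`, acting by `(T ξ) i = ∑ j, T i j (ξ j)`. -/
def matToOp {E : Type*} [NormedAddCommGroup E] [InnerProductSpace ℂ E] {n : ℕ}
    (T : Matrix (Fin n) (Fin n) (E →L[ℂ] E)) :
    PiLp 2 (fun _ : Fin n => E) →L[ℂ] PiLp 2 (fun _ : Fin n => E) :=
  ∑ i, ∑ j, (inclPi E n i).comp ((T i j).comp (projPi E n j))

/-!
On `(H^n)^n` the operators `P_a ⊗ 1` and `1 ⊗ Q_b` (`leftAmp`, `rightAmp`) are commuting and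
positive, so their product `T_{ab}` is positive. For the diagonal vector
`v_S = ∑_{i ∈ S} e_i ⊗ e_i ⊗ χ` one has `∑_{i,j ∈ S} X^{(a,b)}_{(i,j),(i,j)} = ⟨v_S, T_{ab} v_S⟩`.
Hence these sums are nonnegative, and one vanishes only if `T_{ab} v_S = 0`; as
`v_{{1,…,n}} = ∑_r v_{S_r}`, vanishing on every cell of a partition gives vanishing on all of
`{1,…,n}`. The POVM relations give `∑_{a,b} ∑_{i,j} X^{(a,b)}_{(i,j),(i,j)} = n`, so (2) says
exactly that the nonnegative off-diagonal sums add up to zero.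
-/

open scoped InnerProductSpace ComplexOrder

theorem Fintype.sum_sum_eq_sum_diag_iff {α ι : Type*} [AddCommMonoid α] [PartialOrder α]
    [IsOrderedCancelAddMonoid α] [Fintype ι] [DecidableEq ι] {t : ι → ι → α}
    (ht : ∀ a b, 0 ≤ t a b) : ∑ a, ∑ b, t a b = ∑ a, t a a ↔ ∀ a b, a ≠ b → t a b = 0 := by
  have hsplit : ∑ a, ∑ b, t a b = ∑ a, t a a + ∑ a, ∑ b ∈ Finset.univ.erase a, t a b := by
    rw [← Finset.sum_add_distrib]
    exact Finset.sum_congr rfl fun a _ => (Finset.add_sum_erase _ _ (Finset.mem_univ a)).symm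
  rw [hsplit, add_eq_left,
    Finset.sum_eq_zero_iff_of_nonneg fun a _ => Finset.sum_nonneg fun b _ => ht a b]
  refine forall_congr' fun a => ?_
  rw [Finset.sum_eq_zero_iff_of_nonneg fun b _ => ht a b]
  simp [ne_comm]

namespace ContinuousLinearMap

variable {E : Type*} [NormedAddCommGroup E] [InnerProductSpace ℂ E]

theorem IsPositive.map_eq_zero_of_inner_map_self_eq_zero [CompleteSpace E] {T : E →L[ℂ] E}
    (hT : T.IsPositive) {x : E} (hx : ⟪x, T x⟫_ℂ = 0) : T x = 0 := by
  obtain ⟨S, rfl⟩ :=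
    CStarAlgebra.nonneg_iff_eq_star_mul_self.mp ((nonneg_iff_isPositive T).mpr hT)
  rw [mul_apply_eq_comp, star_eq_adjoint, adjoint_inner_right, inner_self_eq_zero] at hx
  rw [mul_apply_eq_comp, hx, map_zero]

theorem isPositive_of_inner_eq_sum {F ι : Type*} [NormedAddCommGroup F] [InnerProductSpace ℂ F]
    [Fintype ι] {T : F →L[ℂ] F} {A : E →L[ℂ] E} (hA : A.IsPositive) (f : ι → F → E)
    (h : ∀ ξ η, ⟪T ξ, η⟫_ℂ = ∑ j, ⟪A (f j ξ), f j η⟫_ℂ) : T.IsPositive := by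
  rw [isPositive_iff]
  refine ⟨fun ξ η => ?_,
    fun ξ => (h ξ ξ).symm ▸ Finset.sum_nonneg fun j _ => hA.inner_nonneg_left _⟩
  rw [coe_coe, h, ← inner_conj_symm, h, map_sum]
  exact Finset.sum_congr rfl fun j _ => by rw [inner_conj_symm]; exact hA.isSymmetric _ _

end ContinuousLinearMap

section MatToOp

variable {E : Type*} [NormedAddCommGroup E] [InnerProductSpace ℂ E] {n : ℕ}

@[simp]
theorem inclPi_apply (i k : Fin n) (x : E) : inclPi E n i x k = if k = i then x else 0 := by
  by_cases h : k = i <;> simp [inclPi, h]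

@[simp]
theorem matToOp_apply (T : Matrix (Fin n) (Fin n) (E →L[ℂ] E)) (ξ : PiLp 2 (fun _ : Fin n => E))
    (k : Fin n) : matToOp T ξ k = ∑ j, T k j (ξ j) := by
  simp [matToOp, projPi, Finset.sum_apply]

@[simp]
theorem matToOp_diagonal_apply (d : Fin n → E →L[ℂ] E) (ξ : PiLp 2 (fun _ : Fin n => E))
    (k : Fin n) : matToOp (Matrix.diagonal d) ξ k = d k (ξ k) := by
  rw [matToOp_apply, Finset.sum_eq_single k
    (fun j _ hj => by simp [Matrix.diagonal_apply_ne _ hj.symm]) (by simp),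
    Matrix.diagonal_apply_eq]

theorem sum_entry_eq_ite_of_sum_matToOp_eq_one {c : ℕ}
    {P : Fin c → Matrix (Fin n) (Fin n) (E →L[ℂ] E)} (hP : ∑ a, matToOp (P a) = 1) (i k : Fin n) :
    ∑ a, P a i k = if i = k then 1 else 0 := by
  ext x
  have h := congrArg (fun T => T (inclPi E n k x) i) hP
  simp only [FunLike.coe_sum, Finset.sum_apply, WithLp.ofLp_sum, matToOp_apply, inclPi_apply,
    apply_ite, map_zero, Finset.sum_ite_eq', Finset.mem_univ, if_true] at h
  by_cases hik : i = k <;> simp_all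

end MatToOp

section Amplification

variable {E : Type*} [NormedAddCommGroup E] [InnerProductSpace ℂ E] {n : ℕ}

def leftAmp (P : Matrix (Fin n) (Fin n) (E →L[ℂ] E)) :
    PiLp 2 (fun _ : Fin n => PiLp 2 (fun _ : Fin n => E)) →L[ℂ]
      PiLp 2 (fun _ : Fin n => PiLp 2 (fun _ : Fin n => E)) :=
  matToOp (Matrix.of fun i k => matToOp (Matrix.diagonal fun _ => P i k))

def rightAmp (Q : Matrix (Fin n) (Fin n) (E →L[ℂ] E)) :
    PiLp 2 (fun _ : Fin n => PiLp 2 (fun _ : Fin n => E)) →L[ℂ]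
      PiLp 2 (fun _ : Fin n => PiLp 2 (fun _ : Fin n => E)) :=
  matToOp (Matrix.diagonal fun _ => matToOp Q)

@[simp]
theorem leftAmp_apply (P : Matrix (Fin n) (Fin n) (E →L[ℂ] E))
    (ξ : PiLp 2 (fun _ : Fin n => PiLp 2 (fun _ : Fin n => E))) (i j : Fin n) :
    leftAmp P ξ i j = ∑ k, P i k (ξ k j) := by
  rw [leftAmp, matToOp_apply]
  simp only [WithLp.ofLp_sum, Finset.sum_apply, Matrix.of_apply, matToOp_diagonal_apply]

@[simp]
theorem rightAmp_apply (Q : Matrix (Fin n) (Fin n) (E →L[ℂ] E))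
    (ξ : PiLp 2 (fun _ : Fin n => PiLp 2 (fun _ : Fin n => E))) (i j : Fin n) :
    rightAmp Q ξ i j = ∑ l, Q j l (ξ i l) := by
  rw [rightAmp, matToOp_diagonal_apply, matToOp_apply]

theorem commute_leftAmp_rightAmp {P Q : Matrix (Fin n) (Fin n) (E →L[ℂ] E)}
    (hPQ : ∀ i j k l, (P i j).comp (Q k l) = (Q k l).comp (P i j)) :
    Commute (leftAmp P) (rightAmp Q) := by
  ext ξ i j
  simp only [mul_apply_eq_comp, leftAmp_apply, rightAmp_apply, map_sum]
  rw [Finset.sum_comm]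
  exact Finset.sum_congr rfl fun l _ => Finset.sum_congr rfl fun k _ =>
    DFunLike.congr_fun (hPQ i k j l) (ξ k l)

theorem inner_leftAmp (P : Matrix (Fin n) (Fin n) (E →L[ℂ] E))
    (ξ η : PiLp 2 (fun _ : Fin n => PiLp 2 (fun _ : Fin n => E))) :
    ⟪leftAmp P ξ, η⟫_ℂ =
      ∑ j, ⟪matToOp P (WithLp.toLp 2 fun i => ξ i j), WithLp.toLp 2 fun i => η i j⟫_ℂ := by
  simp only [PiLp.inner_apply, leftAmp_apply, matToOp_apply]
  exact Finset.sum_comm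

theorem inner_rightAmp (Q : Matrix (Fin n) (Fin n) (E →L[ℂ] E))
    (ξ η : PiLp 2 (fun _ : Fin n => PiLp 2 (fun _ : Fin n => E))) :
    ⟪rightAmp Q ξ, η⟫_ℂ = ∑ i, ⟪matToOp Q (ξ i), η i⟫_ℂ := by
  simp only [PiLp.inner_apply, rightAmp, matToOp_diagonal_apply]

theorem isPositive_leftAmp {P : Matrix (Fin n) (Fin n) (E →L[ℂ] E)}
    (hP : (matToOp P).IsPositive) : (leftAmp P).IsPositive :=
  ContinuousLinearMap.isPositive_of_inner_eq_sum hP (fun j ξ => WithLp.toLp 2 fun i => ξ i j)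
    (inner_leftAmp P)

theorem isPositive_rightAmp {Q : Matrix (Fin n) (Fin n) (E →L[ℂ] E)}
    (hQ : (matToOp Q).IsPositive) : (rightAmp Q).IsPositive :=
  ContinuousLinearMap.isPositive_of_inner_eq_sum hQ (fun i ξ => ξ i) (inner_rightAmp Q)

theorem isPositive_leftAmp_mul_rightAmp [CompleteSpace E]
    {P Q : Matrix (Fin n) (Fin n) (E →L[ℂ] E)} (hP : (matToOp P).IsPositive)
    (hQ : (matToOp Q).IsPositive) (hPQ : ∀ i j k l, (P i j).comp (Q k l) = (Q k l).comp (P i j)) :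
    (leftAmp P * rightAmp Q).IsPositive := by
  have hL := (ContinuousLinearMap.nonneg_iff_isPositive _).mpr (isPositive_leftAmp hP)
  have hR := (ContinuousLinearMap.nonneg_iff_isPositive _).mpr (isPositive_rightAmp hQ)
  exact (ContinuousLinearMap.nonneg_iff_isPositive _).mp
    ((commute_leftAmp_rightAmp hPQ).mul_nonneg hL hR)

end Amplification

section DiagVec

def diagVec {E : Type*} [AddCommGroup E] {n : ℕ} (χ : E) (S : Finset (Fin n)) :
    PiLp 2 (fun _ : Fin n => PiLp 2 (fun _ : Fin n => E)) :=
  WithLp.toLp 2 fun i => WithLp.toLp 2 fun j => if i = j ∧ i ∈ S then χ else 0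

theorem diagVec_univ_eq_sum {E : Type*} [AddCommGroup E] {n ℓ : ℕ}
    {S : Fin ℓ → Finset (Fin n)} (hS : ∀ x, ∃! r, x ∈ S r) (χ : E) :
    diagVec χ Finset.univ = ∑ r, diagVec χ (S r) := by
  ext i j
  simp only [diagVec, WithLp.ofLp_sum, Finset.sum_apply, PiLp.toLp_apply, Finset.mem_univ,
    and_true]
  obtain ⟨r, hr, huniq⟩ := hS i
  rw [Finset.sum_eq_single r
    (fun s _ hs => by simp [show i ∉ S s from fun h => hs (huniq s h)]) (by simp)]
  simp [hr]

variable {E : Type*} [NormedAddCommGroup E] [InnerProductSpace ℂ E] {n : ℕ}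

theorem inner_diagVec_left (χ : E) (S : Finset (Fin n))
    (ξ : PiLp 2 (fun _ : Fin n => PiLp 2 (fun _ : Fin n => E))) :
    ⟪diagVec χ S, ξ⟫_ℂ = ∑ i ∈ S, ⟪χ, ξ i i⟫_ℂ := by
  have h (i j : Fin n) :
      ⟪diagVec χ S i j, ξ i j⟫_ℂ = if i = j ∧ i ∈ S then ⟪χ, ξ i j⟫_ℂ else 0 := by
    by_cases hij : i = j ∧ i ∈ S
    · obtain ⟨rfl, hi⟩ := hij
      simp [diagVec, hi]
    · simp only [diagVec, PiLp.toLp_apply, if_neg hij, inner_zero_left]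
  simp [PiLp.inner_apply, h, ite_and, Finset.sum_ite_mem]

theorem inner_diagVec_leftAmp_mul_rightAmp (P Q : Matrix (Fin n) (Fin n) (E →L[ℂ] E)) (χ : E)
    (S T : Finset (Fin n)) :
    ⟪diagVec χ S, (leftAmp P * rightAmp Q) (diagVec χ T)⟫_ℂ =
      ∑ i ∈ S, ∑ k ∈ T, ⟪χ, P i k (Q i k χ)⟫_ℂ := by
  have h (i j : Fin n) : leftAmp P (rightAmp Q (diagVec χ T)) i j = ∑ k ∈ T, P i k (Q j k χ) := by
    simp [diagVec, apply_ite, ite_and, Finset.sum_ite_mem]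
  simp only [mul_apply_eq_comp, inner_diagVec_left, h, inner_sum]

end DiagVec

theorem sum_inner_apply_eq_natCast_mul_inner_self {E : Type*} [NormedAddCommGroup E]
    [InnerProductSpace ℂ E] {n c : ℕ} {P Q : Fin c → Matrix (Fin n) (Fin n) (E →L[ℂ] E)}
    (hP : ∑ a, matToOp (P a) = 1) (hQ : ∑ b, matToOp (Q b) = 1) (χ : E) :
    ∑ a, ∑ b, ∑ i, ∑ j, ⟪χ, P a i j (Q b i j χ)⟫_ℂ = n * ⟪χ, χ⟫_ℂ := by
  have hentry (i j : Fin n) :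
      ∑ a, ∑ b, ⟪χ, P a i j (Q b i j χ)⟫_ℂ = if i = j then ⟪χ, χ⟫_ℂ else 0 := by
    calc ∑ a, ∑ b, ⟪χ, P a i j (Q b i j χ)⟫_ℂ = ⟪χ, (∑ a, P a i j) ((∑ b, Q b i j) χ)⟫_ℂ := by
          simp only [FunLike.coe_sum, Finset.sum_apply, map_sum, inner_sum]
          exact Finset.sum_comm
      _ = _ := by
          rw [sum_entry_eq_ite_of_sum_matToOp_eq_one hP, sum_entry_eq_ite_of_sum_matToOp_eq_one hQ]
          split_ifs <;> simp
  calc ∑ a, ∑ b, ∑ i, ∑ j, ⟪χ, P a i j (Q b i j χ)⟫_ℂ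
      = ∑ i, ∑ j, ∑ a, ∑ b, ⟪χ, P a i j (Q b i j χ)⟫_ℂ := by
        simp only [Finset.sum_comm (s := (Finset.univ : Finset (Fin c)))
          (t := (Finset.univ : Finset (Fin n)))]
    _ = n * ⟪χ, χ⟫_ℂ := by simp [hentry]

/-- **Characterization of synchronous correlations.**  Let `{P_a}`, `{Q_b}` be POVMs with `c`
outputs in `M_n(B(H))` with mutually commuting entries, `χ ∈ H` a unit vector, and let
`X^{(a,b)}_{(i,j),(k,l)} = ⟨P_{a,ij} Q_{b,kl} χ, χ⟩` be the associated correlation.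
The following are equivalent:
(1) there is a partition `S_1 ∪ ⋯ ∪ S_ℓ` of `{1,…,n}` such that for every cell `S_r` and all
    `a ≠ b` one has `∑_{i,j ∈ S_r} X^{(a,b)}_{(i,j),(i,j)} = 0` (i.e. `X` is synchronous);
(2) `(1/n) ∑_{a=1}^c ∑_{i,j=1}^n X^{(a,a)}_{(i,j),(i,j)} = 1`;
(3) `∑_{i,j=1}^n X^{(a,b)}_{(i,j),(i,j)} = 0` whenever `a ≠ b`. -/
theorem synchronous_tfae {H : Type*} [NormedAddCommGroup H]
    [InnerProductSpace ℂ H] [CompleteSpace H] (n c : ℕ) (hn : 1 ≤ n)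
    (P Q : Fin c → Matrix (Fin n) (Fin n) (H →L[ℂ] H))
    (hPpos : ∀ a, (matToOp (P a)).IsPositive)
    (hPsum : ∑ a, matToOp (P a) = 1)
    (hQpos : ∀ b, (matToOp (Q b)).IsPositive)
    (hQsum : ∑ b, matToOp (Q b) = 1)
    (hcomm : ∀ a b i j k l, (P a i j).comp (Q b k l) = (Q b k l).comp (P a i j))
    (χ : H) (hχ : ‖χ‖ = 1) :
    List.TFAE
      [ (∃ (ℓ : ℕ) (S : Fin ℓ → Finset (Fin n)),
          (∀ r, (S r).Nonempty) ∧
          (∀ x : Fin n, ∃! r, x ∈ S r) ∧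
          (∀ r, ∀ a b : Fin c, a ≠ b →
            ∑ i ∈ S r, ∑ j ∈ S r, (inner ℂ χ ((P a i j) ((Q b i j) χ)) : ℂ) = 0)),
        ((1 / (n : ℂ)) * ∑ a, ∑ i, ∑ j, (inner ℂ χ ((P a i j) ((Q a i j) χ)) : ℂ) = 1),
        (∀ a b : Fin c, a ≠ b →
          ∑ i, ∑ j, (inner ℂ χ ((P a i j) ((Q b i j) χ)) : ℂ) = 0) ] := by
  let T a b := leftAmp (P a) * rightAmp (Q b)
  have hT (a b) : (T a b).IsPositive :=
    isPositive_leftAmp_mul_rightAmp (hPpos a) (hQpos b) (hcomm a b)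
  have hX (a b) (S : Finset (Fin n)) :
      ∑ i ∈ S, ∑ j ∈ S, ⟪χ, P a i j (Q b i j χ)⟫_ℂ = ⟪diagVec χ S, T a b (diagVec χ S)⟫_ℂ :=
    (inner_diagVec_leftAmp_mul_rightAmp _ _ χ S S).symm
  tfae_have 1 → 3 := by
    rintro ⟨ℓ, S, -, hpart, hS⟩ a b hab
    have hvanish (r) : T a b (diagVec χ (S r)) = 0 :=
      (hT a b).map_eq_zero_of_inner_map_self_eq_zero ((hX a b (S r)).symm.trans (hS r a b hab))
    rw [hX, diagVec_univ_eq_sum hpart, map_sum, Finset.sum_eq_zero fun r _ => hvanish r,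
      inner_zero_right]
  tfae_have 3 → 1 := fun h3 =>
    ⟨1, fun _ => Finset.univ, fun _ => Finset.univ_nonempty_iff.mpr ⟨⟨0, hn⟩⟩,
      fun x => ⟨0, Finset.mem_univ x, fun r _ => Subsingleton.elim r 0⟩, fun _ => h3⟩
  tfae_have 2 ↔ 3 := by
    have htotal : ∑ a, ∑ b, ∑ i, ∑ j, ⟪χ, P a i j (Q b i j χ)⟫_ℂ = n := by
      simp [sum_inner_apply_eq_natCast_mul_inner_self hPsum hQsum χ, inner_self_eq_norm_sq_to_K,
        hχ]
    have hnonneg (a b) : 0 ≤ ∑ i, ∑ j, ⟪χ, P a i j (Q b i j χ)⟫_ℂ := by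
      rw [hX]; exact (hT a b).inner_nonneg_right _
    rw [← Fintype.sum_sum_eq_sum_diag_iff hnonneg, htotal, one_div,
      inv_mul_eq_one₀ (Nat.cast_ne_zero.mpr (by omega))]
  tfae_finish
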